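/- Let Q be a finite acyclic quiver, V a rank-one representation of Q over ℂ (with V(a)(u) = f_a(u)·v_a, v_a ≠ 0, f_a ≠ 0), and σ : Q₀ → ℤ a weight. If V is σ-semistable in the sense of King's criterion, i.e., σ(dim V) = 0 and σ(dim W) ≤ 0 for every subrepresentation W of V, then: (K1) Σ_{i∈Q₀} σ⁺(i)·dim V(i) = Σ_{i∈Q₀} σ⁻(i)·dim V(i), and (F) for every vertex i with σ(i) > 0 the functionals {f_a : ta = i} span V(i)^*, and for every vertex i with σ(i) < 0 the vectors {v_a : ha = i} span V(i). -/

import Mathlib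

/-!
(K1) is the balance condition `σ(dim V) = 0` with `σ` split into its positive and negative
parts. For (F), semistability is tested against two subrepresentations. If the `f_a` leaving a
vertex `i` with `σ(i) > 0` do not span `V(i)^*`, a nonzero `u ∈ V(i)` killed by all of them
spans a subrepresentation concentrated at `i`, of weight `σ(i) > 0`. If the `v_a` entering a
vertex `i` with `σ(i) < 0` do not span `V(i)`, shrinking `V(i)` to their span gives a
subrepresentation of weight `σ(dim V) - σ(i) · codim = -σ(i) · codim > 0`.
-/

/-- A list of arcs (with tail map `tl` and head map `hd`) forms a directed closed walk. -/
def IsClosedWalk {I A : Type} (tl hd : A → I) (l : List A) (hne : l ≠ []) : Prop :=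
  l.Chain' (fun a b => hd a = tl b) ∧ hd (l.getLast hne) = tl (l.head hne)

/-- A quiver is acyclic if it has no directed closed walk. -/
def IsAcyclic {I A : Type} (tl hd : A → I) : Prop :=
  ∀ (l : List A) (hne : l ≠ []), ¬ IsClosedWalk tl hd l hne

/-- The functional `f_a`, viewed in the dual of `Vv i` when `tl a = i` (and `0` otherwise). -/
noncomputable def dualAt {I A : Type} [DecidableEq I] {Vv : I → Type}
    [∀ i, AddCommGroup (Vv i)] [∀ i, Module ℂ (Vv i)] (tl : A → I)
    (f : ∀ a : A, Vv (tl a) →ₗ[ℂ] ℂ) (i : I) (a : A) : Vv i →ₗ[ℂ] ℂ :=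
  if e : tl a = i then cast (congrArg (fun j => Vv j →ₗ[ℂ] ℂ) e) (f a) else 0

/-- The vector `v_a`, viewed in `Vv i` when `hd a = i` (and `0` otherwise). -/
noncomputable def vecAt {I A : Type} [DecidableEq I] {Vv : I → Type}
    [∀ i, AddCommGroup (Vv i)] (hd : A → I)
    (v : ∀ a : A, Vv (hd a)) (i : I) (a : A) : Vv i :=
  if e : hd a = i then cast (congrArg Vv e) (v a) else 0

open Function Module Submodule

section Subrepresentation

variable {I A : Type} {K : Type*} [Field K] {Vv : I → Type}
  [∀ i, AddCommGroup (Vv i)] [∀ i, Module K (Vv i)]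

def IsSubrep (tl hd : A → I) (φ : ∀ a, Vv (tl a) →ₗ[K] Vv (hd a))
    (W : ∀ i, Submodule K (Vv i)) : Prop :=
  ∀ a, (W (tl a)).map (φ a) ≤ W (hd a)

variable [Fintype I] [DecidableEq I]

lemma sum_mul_finrank_update_bot (σ : I → ℤ) (i : I) (S : Submodule K (Vv i)) :
    ∑ j, σ j * (finrank K (update (⊥ : ∀ j, Submodule K (Vv j)) i S j) : ℤ) =
      σ i * finrank K S := by
  rw [Fintype.sum_eq_single i fun j hj => by rw [update_of_ne hj]; simp, update_self]

lemma sum_mul_finrank_update_top (σ : I → ℤ) (i : I) (S : Submodule K (Vv i)) :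
    ∑ j, σ j * (finrank K (update (⊤ : ∀ j, Submodule K (Vv j)) i S j) : ℤ) =
      ∑ j, σ j * (finrank K (Vv j) : ℤ) - σ i * (finrank K (Vv i) - finrank K S) := by
  rw [← Finset.add_sum_erase _ _ (Finset.mem_univ i),
    ← Finset.add_sum_erase _ _ (Finset.mem_univ i),
    Finset.sum_congr rfl fun j hj => by
      rw [update_of_ne (Finset.ne_of_mem_erase hj), Pi.top_apply, finrank_top], update_self]
  ring

end Subrepresentation

lemma sum_max_mul_eq_sum_max_neg_mul {I : Type} [Fintype I] {σ d : I → ℤ}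
    (h : ∑ i, σ i * d i = 0) : ∑ i, max (σ i) 0 * d i = ∑ i, max (-σ i) 0 * d i := by
  rw [← sub_eq_zero, ← Finset.sum_sub_distrib]
  simpa only [← sub_mul, max_zero_sub_eq_self] using h

lemma Subspace.dualCoannihilator_ne_bot {K V : Type*} [Field K] [AddCommGroup V] [Module K V]
    [FiniteDimensional K V] {Φ : Submodule K (Dual K V)} (h : Φ ≠ ⊤) :
    Φ.dualCoannihilator ≠ ⊥ := by
  contrapose! h
  rw [← Subspace.dualCoannihilator_dualAnnihilator_eq (W := Φ), h, dualAnnihilator_bot]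

section RankOne

variable {I A : Type} [DecidableEq I] {Vv : I → Type} [∀ i, AddCommGroup (Vv i)]
  [∀ i, Module ℂ (Vv i)] (tl hd : A → I) (f : ∀ a : A, Vv (tl a) →ₗ[ℂ] ℂ)
  (v : ∀ a : A, Vv (hd a))

lemma isSubrep_update_bot_span_singleton {i : I} {u : Vv i}
    (hu : u ∈ (span ℂ (dualAt tl f i '' {a | tl a = i})).dualCoannihilator) :
    IsSubrep tl hd (fun a => (f a).smulRight (v a)) (update ⊥ i (ℂ ∙ u)) := by
  intro a
  by_cases e : tl a = i
  · subst e
    have hfa : f a u = 0 := by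
      simpa [dualAt] using (mem_dualCoannihilator u).1 hu _ (subset_span ⟨a, rfl, rfl⟩)
    rw [update_self]
    rintro _ ⟨w, hw, rfl⟩
    obtain ⟨c, rfl⟩ := mem_span_singleton.1 hw
    simp [hfa]
  · simp [update_of_ne e]

lemma isSubrep_update_top_span_vecAt (i : I) :
    IsSubrep tl hd (fun a => (f a).smulRight (v a))
      (update ⊤ i (span ℂ (vecAt hd v i '' {a | hd a = i}))) := by
  intro a
  by_cases e : hd a = i
  · subst e
    have hva : v a ∈ span ℂ (vecAt hd v (hd a) '' {a' | hd a' = hd a}) :=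
      subset_span ⟨a, rfl, by simp [vecAt]⟩
    rw [update_self]
    rintro _ ⟨w, -, rfl⟩
    exact smul_mem _ _ hva
  · rw [update_of_ne e]
    exact le_top

end RankOne

theorem rank_one_semistable_necessary_general
    {I A : Type} [Fintype I] [DecidableEq I]
    (tl hd : A → I)
    (Vv : I → Type) [∀ i, AddCommGroup (Vv i)] [∀ i, Module ℂ (Vv i)]
    [∀ i, FiniteDimensional ℂ (Vv i)]
    (f : ∀ a : A, Vv (tl a) →ₗ[ℂ] ℂ) (v : ∀ a : A, Vv (hd a))
    (σ : I → ℤ)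
    (hss : (∑ i : I, σ i * (Module.finrank ℂ (Vv i) : ℤ)) = 0 ∧
      ∀ W : ∀ i, Submodule ℂ (Vv i),
        (∀ a : A, (W (tl a)).map ((f a).smulRight (v a)) ≤ W (hd a)) →
        (∑ i : I, σ i * (Module.finrank ℂ (W i) : ℤ)) ≤ 0) :
    ((∑ i : I, max (σ i) 0 * (Module.finrank ℂ (Vv i) : ℤ)) =
        (∑ i : I, max (-σ i) 0 * (Module.finrank ℂ (Vv i) : ℤ))) ∧
    (∀ i : I, 0 < σ i →
      Submodule.span ℂ (dualAt tl f i '' {a : A | tl a = i}) = ⊤) ∧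
    (∀ i : I, σ i < 0 →
      Submodule.span ℂ (vecAt hd v i '' {a : A | hd a = i}) = ⊤) := by
  obtain ⟨hbalance, hsub⟩ := hss
  refine ⟨sum_max_mul_eq_sum_max_neg_mul hbalance, fun i hi => ?_, fun i hi => ?_⟩
  · by_contra hspan
    obtain ⟨u, hu, hu0⟩ := (Submodule.ne_bot_iff _).1 (Subspace.dualCoannihilator_ne_bot hspan)
    have hle := hsub _ (isSubrep_update_bot_span_singleton tl hd f v hu)
    rw [sum_mul_finrank_update_bot, finrank_span_singleton hu0] at hle
    omega
  · by_contra hspan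
    have hle := hsub _ (isSubrep_update_top_span_vecAt tl hd f v i)
    rw [sum_mul_finrank_update_top, hbalance] at hle
    have hcodim : (0 : ℤ) <
        finrank ℂ (Vv i) - finrank ℂ (span ℂ (vecAt hd v i '' {a | hd a = i})) :=
      sub_pos.2 (by exact_mod_cast finrank_lt hspan)
    nlinarith

/-- If a rank-one representation is `σ`-semistable (in the sense of King's criterion),
then (K1) `Σ_i σ⁺(i)·dim V(i) = Σ_i σ⁻(i)·dim V(i)`, and (F) the functionals
`{f_a : ta = i}` span `V(i)^*` whenever `σ(i) > 0`, and the vectors `{v_a : ha = i}`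
span `V(i)` whenever `σ(i) < 0`. -/
theorem rank_one_semistable_necessary
    {I A : Type} [Fintype I] [Fintype A] [DecidableEq I]
    (tl hd : A → I) (hacyc : IsAcyclic tl hd)
    (Vv : I → Type) [∀ i, AddCommGroup (Vv i)] [∀ i, Module ℂ (Vv i)]
    [∀ i, FiniteDimensional ℂ (Vv i)]
    (f : ∀ a : A, Vv (tl a) →ₗ[ℂ] ℂ) (v : ∀ a : A, Vv (hd a))
    (hf : ∀ a : A, f a ≠ 0) (hv : ∀ a : A, v a ≠ 0)
    (σ : I → ℤ)
    (hss : (∑ i : I, σ i * (Module.finrank ℂ (Vv i) : ℤ)) = 0 ∧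
      ∀ W : ∀ i, Submodule ℂ (Vv i),
        (∀ a : A, (W (tl a)).map ((f a).smulRight (v a)) ≤ W (hd a)) →
        (∑ i : I, σ i * (Module.finrank ℂ (W i) : ℤ)) ≤ 0) :
    ((∑ i : I, max (σ i) 0 * (Module.finrank ℂ (Vv i) : ℤ)) =
        (∑ i : I, max (-σ i) 0 * (Module.finrank ℂ (Vv i) : ℤ))) ∧
    (∀ i : I, 0 < σ i →
      Submodule.span ℂ (dualAt tl f i '' {a : A | tl a = i}) = ⊤) ∧
    (∀ i : I, σ i < 0 →
      Submodule.span ℂ (vecAt hd v i '' {a : A | hd a = i}) = ⊤) :=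
  rank_one_semistable_necessary_general tl hd Vv f v σ hss
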